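/- arXiv:2412.01816 — 6 statements merged into one kernel-verified Lean document; each statement's English description precedes it below -/
import Mathlib

section
/- Let X be a connected, locally connected, locally compact, σ-compact Hausdorff space and let K ⊆ X be a nonempty compact subset. Then X \ K has only finitely many connected components with noncompact closure. -/
open Set

/-- A connected component of an open set is relatively closed: its closure meets the
open set only in itself (in a locally connected space). -/
lemma closure_inter_subset_connectedComponentIn {X : Type*} [TopologicalSpace X]
    [LocallyConnectedSpace X] {U : Set X} (hU : IsOpen U) (x : X) :
    closure (connectedComponentIn U x) ∩ U ⊆ connectedComponentIn U x := by
  rintro y ⟨hyc, hyU⟩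
  have hopen : IsOpen (connectedComponentIn U y) := hU.connectedComponentIn
  have hmem : y ∈ connectedComponentIn U y := mem_connectedComponentIn hyU
  obtain ⟨z, hz1, hz2⟩ := mem_closure_iff.1 hyc _ hopen hmem
  have h1 : connectedComponentIn U y = connectedComponentIn U z := connectedComponentIn_eq hz1
  have h2 : connectedComponentIn U x = connectedComponentIn U z := connectedComponentIn_eq hz2
  rw [h2, ← h1]; exact hmem

/-- In a generalized continuum, the complement of a nonempty compactum has only
finitely many components with noncompact closure. -/
theorem stmt4 {X : Type*} [TopologicalSpace X] [T2Space X] [ConnectedSpace X]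
    [LocallyConnectedSpace X] [LocallyCompactSpace X] [SigmaCompactSpace X]
    (K : Set X) (hK : IsCompact K) (hKne : K.Nonempty) :
    {C : Set X | (∃ x ∈ Kᶜ, C = connectedComponentIn Kᶜ x) ∧
      ¬ IsCompact (closure C)}.Finite := by
  obtain ⟨L, hL, hKL⟩ := exists_compact_superset hK
  have hLclosed : IsClosed L := hL.isClosed
  have hUopen : IsOpen Kᶜ := hK.isClosed.isOpen_compl
  -- the frontier of L is compact and disjoint from K
  have hFsub : frontier L ⊆ L := hLclosed.frontier_subset
  have hFcompact : IsCompact (frontier L) := hL.of_isClosed_subset isClosed_frontier hFsub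
  have hFK : frontier L ⊆ Kᶜ := fun z hz hzK => hz.2 (hKL hzK)
  -- cover the frontier of L by components of Kᶜ; extract a finite subcover
  have hcover : frontier L ⊆ ⋃ y ∈ frontier L, connectedComponentIn Kᶜ y := fun y hy =>
    mem_biUnion hy (mem_connectedComponentIn (hFK hy))
  obtain ⟨t, htsub, htfin, htcover⟩ :=
    hFcompact.elim_finite_subcover_image (fun y _ => hUopen.connectedComponentIn) hcover
  -- every unbounded component is one of the finitely many components meeting the frontier
  apply Set.Finite.subset (htfin.image fun y => connectedComponentIn Kᶜ y)
  rintro C ⟨⟨x, hx, rfl⟩, hnc⟩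
  set C := connectedComponentIn Kᶜ x with hC
  -- C meets the complement of L
  have hp : ∃ p ∈ C, p ∉ L := by
    by_contra h
    push_neg at h
    exact hnc (hL.of_isClosed_subset isClosed_closure
      (closure_minimal h hLclosed))
  obtain ⟨p, hpC, hpL⟩ := hp
  -- the frontier of C is nonempty and contained in K
  have hCne : C.Nonempty := ⟨x, mem_connectedComponentIn hx⟩
  have hCopen : IsOpen C := hUopen.connectedComponentIn
  have hCneq : C ≠ univ := by
    intro h
    obtain ⟨k, hk⟩ := hKne
    exact connectedComponentIn_subset Kᶜ x (h.ge (mem_univ k)) hk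
  obtain ⟨q, hq⟩ := nonempty_frontier_iff.2 ⟨hCne, hCneq⟩
  have hqK : q ∈ K := by
    by_contra hqK
    exact hq.2 (by
      rw [hCopen.interior_eq]
      exact closure_inter_subset_connectedComponentIn hUopen x ⟨hq.1, hqK⟩)
  -- the closure of C is connected, meets interior L (at q) and Lᶜ (at p), so meets frontier L
  have hclconn : IsPreconnected (closure C) := isPreconnected_connectedComponentIn.closure
  have hzF : (closure C ∩ frontier L).Nonempty := by
    by_contra hemp
    rw [not_nonempty_iff_eq_empty] at hemp
    have hsub : closure C ⊆ interior L ∪ Lᶜ := by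
      intro y hy
      by_cases hyL : y ∈ L
      · by_cases hyint : y ∈ interior L
        · exact Or.inl hyint
        · exfalso
          have hmem : y ∈ closure C ∩ frontier L := ⟨hy, subset_closure hyL, hyint⟩
          rw [hemp] at hmem
          exact hmem
      · exact Or.inr hyL
    obtain ⟨z, _, hz1, hz2⟩ := hclconn (interior L) Lᶜ isOpen_interior hLclosed.isOpen_compl
      hsub ⟨q, hq.1, hKL hqK⟩ ⟨p, subset_closure hpC, hpL⟩
    exact hz2 (interior_subset hz1)
  obtain ⟨z, hzcl, hzF⟩ := hzF
  -- z is in C itself since the frontier of L avoids K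
  have hzC : z ∈ C := closure_inter_subset_connectedComponentIn hUopen x ⟨hzcl, hFK hzF⟩
  -- z lies in one of the finitely many covering components
  obtain ⟨y, hyt, hzy⟩ := mem_iUnion₂.1 (htcover hzF)
  refine ⟨y, hyt, ?_⟩
  show connectedComponentIn Kᶜ y = C
  have h1 : connectedComponentIn Kᶜ y = connectedComponentIn Kᶜ z := connectedComponentIn_eq hzy
  have h2 : C = connectedComponentIn Kᶜ z := connectedComponentIn_eq hzC
  rw [h1, ← h2]
end

section
/- Let X be a connected, locally connected, locally compact, σ-compact Hausdorff space and let K ⊆ X be a nonempty compact subset. Define K' to be the union of K with all connected components of X \ K whose closure is compact. Then K' is compact. -/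
open Set Classical

/-- Closure of a connected component of the complement of `K` lies in the component plus `K`. -/
lemma closure_comp_subset {X : Type*} [TopologicalSpace X] [LocallyConnectedSpace X]
    (K : Set X) (hKo : IsOpen Kᶜ) (x : X) :
    closure (connectedComponentIn Kᶜ x) ⊆ connectedComponentIn Kᶜ x ∪ K := by
  intro y hy
  by_contra hcon
  obtain ⟨hy1, hy2⟩ : y ∉ connectedComponentIn Kᶜ x ∧ y ∉ K := by
    constructor <;> intro h <;> exact hcon (by simp [h])
  have hyF : y ∈ Kᶜ := hy2
  have hD : IsOpen (connectedComponentIn Kᶜ y) := hKo.connectedComponentIn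
  have hyD : y ∈ connectedComponentIn Kᶜ y := mem_connectedComponentIn hyF
  obtain ⟨z, hz1, hz2⟩ := mem_closure_iff.mp hy _ hD hyD
  have e1 : connectedComponentIn Kᶜ z = connectedComponentIn Kᶜ y := (connectedComponentIn_eq hz1).symm
  have e2 : connectedComponentIn Kᶜ z = connectedComponentIn Kᶜ x := (connectedComponentIn_eq hz2).symm
  exact hy1 (e2 ▸ e1 ▸ hyD)

/-- The bounded filling of a nonempty compactum in a generalized continuum is compact. -/
theorem stmt5 {X : Type*} [TopologicalSpace X] [T2Space X] [ConnectedSpace X]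
    [LocallyConnectedSpace X] [LocallyCompactSpace X] [SigmaCompactSpace X]
    (K : Set X) (hK : IsCompact K) (hKne : K.Nonempty) :
    IsCompact (K ∪ ⋃₀ {C : Set X | (∃ x ∈ Kᶜ, C = connectedComponentIn Kᶜ x) ∧
      IsCompact (closure C)}) := by
  classical
  set S : Set (Set X) := {C : Set X | (∃ x ∈ Kᶜ, C = connectedComponentIn Kᶜ x) ∧
      IsCompact (closure C)} with hS
  set K' : Set X := K ∪ ⋃₀ S with hK'
  have hKo : IsOpen Kᶜ := hK.isClosed.isOpen_compl
  -- K' is closed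
  have hclosed : IsClosed K' := by
    rw [← isOpen_compl_iff, isOpen_iff_forall_mem_open]
    intro y hy
    have hyK : y ∉ K := fun h => hy (Or.inl h)
    have hyS : y ∉ ⋃₀ S := fun h => hy (Or.inr h)
    refine ⟨connectedComponentIn Kᶜ y, ?_, hKo.connectedComponentIn,
      mem_connectedComponentIn hyK⟩
    intro z hz hz'
    rcases hz' with hz' | hz'
    · exact connectedComponentIn_subset _ _ hz hz'
    · obtain ⟨C, hC, hzC⟩ := hz'
      obtain ⟨⟨w, hw, rfl⟩, hCcpt⟩ := hC
      have e1 : connectedComponentIn Kᶜ z = connectedComponentIn Kᶜ y := (connectedComponentIn_eq hz).symm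
      have e2 : connectedComponentIn Kᶜ z = connectedComponentIn Kᶜ w := (connectedComponentIn_eq hzC).symm
      refine hyS ⟨connectedComponentIn Kᶜ w, ⟨⟨w, hw, rfl⟩, hCcpt⟩, ?_⟩
      rw [← e2, e1]
      exact mem_connectedComponentIn hyK
  -- compact superset L with K ⊆ interior L
  obtain ⟨L, hLcpt, hKL⟩ := exists_compact_superset hK
  have hLclosed : IsClosed L := hLcpt.isClosed
  have hfront : frontier L ⊆ Kᶜ := by
    intro y hy hyK
    exact hy.2 (interior_mono (subset_refl _) (hKL hyK))
  have hfrontcpt : IsCompact (frontier L) :=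
    hLcpt.of_isClosed_subset isClosed_frontier hLclosed.frontier_subset
  -- finite subcover of frontier by components
  have hcov : frontier L ⊆ ⋃ y : frontier L, connectedComponentIn Kᶜ (y : X) := by
    intro y hy
    exact mem_iUnion.mpr ⟨⟨y, hy⟩, mem_connectedComponentIn (hfront hy)⟩
  obtain ⟨t, ht⟩ := hfrontcpt.elim_finite_subcover
    (fun y : frontier L => connectedComponentIn Kᶜ (y : X))
    (fun y => hKo.connectedComponentIn) hcov
  -- compact pieces
  set f : frontier L → Set X := fun y =>
    if IsCompact (closure (connectedComponentIn Kᶜ (y : X))) then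
      closure (connectedComponentIn Kᶜ (y : X)) else ∅ with hf
  have hfcpt : ∀ y, IsCompact (f y) := by
    intro y
    simp only [hf]
    split
    · assumption
    · exact isCompact_empty
  set M : Set X := L ∪ ⋃ y ∈ t, f y with hM
  have hMcpt : IsCompact M :=
    hLcpt.union (t.finite_toSet.isCompact_biUnion (fun y _ => hfcpt y))
  -- K' ⊆ M
  have hsub : K' ⊆ M := by
    rintro p (hp | ⟨C, hC, hpC⟩)
    · exact Or.inl (interior_subset (hKL hp))
    · obtain ⟨⟨x, hx, rfl⟩, hCcpt⟩ := hC
      set C := connectedComponentIn Kᶜ x with hCdef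
      by_cases hmeet : (C ∩ frontier L).Nonempty
      · obtain ⟨y, hyC, hyF⟩ := hmeet
        obtain ⟨z, hzt, hyz⟩ := mem_iUnion₂.mp (ht hyF)
        have e1 : connectedComponentIn Kᶜ y = C := (connectedComponentIn_eq hyC).symm
        have e2 : connectedComponentIn Kᶜ y = connectedComponentIn Kᶜ (z : X) :=
          (connectedComponentIn_eq hyz).symm
        have eC : connectedComponentIn Kᶜ (z : X) = C := by rw [← e2, e1]
        have hfz : f z = closure C := by
          rw [hf]; simp only [eC]; exact if_pos hCcpt
        exact Or.inr (mem_biUnion hzt (hfz ▸ subset_closure hpC))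
      · -- C misses the frontier, so C ⊆ interior L or C ⊆ Lᶜ
        have hCsub : C ⊆ interior L ∪ Lᶜ := by
          intro w hw
          by_cases h1 : w ∈ L
          · by_cases h2 : w ∈ interior L
            · exact Or.inl h2
            · exact absurd (⟨w, hw, subset_closure h1, h2⟩ : (C ∩ frontier L).Nonempty) hmeet
          · exact Or.inr h1
        have hdisj : Disjoint (interior L) Lᶜ :=
          disjoint_compl_right.mono_left interior_subset
        have := isPreconnected_connectedComponentIn.subset_or_subset isOpen_interior
          hLclosed.isOpen_compl hdisj hCsub
        rcases this with h | h
        · exact Or.inl (interior_subset (h hpC))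
        · -- impossible: frontier of C is nonempty, contained in K ⊆ interior L
          exfalso
          have hCo : IsOpen C := hKo.connectedComponentIn
          have hCne : C.Nonempty := ⟨x, mem_connectedComponentIn hx⟩
          have hclC : closure C ⊆ C ∪ K := closure_comp_subset K hKo x
          have hfrC : (closure C \ C).Nonempty := by
            by_contra hh
            rw [Set.not_nonempty_iff_eq_empty, Set.diff_eq_empty] at hh
            have hCclopen : IsClopen C := ⟨closure_eq_iff_isClosed.mp
              (Set.Subset.antisymm hh subset_closure), hCo⟩
            rcases isClopen_iff.mp hCclopen with h0 | h0
            · exact hCne.ne_empty h0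
            · obtain ⟨k, hk⟩ := hKne
              have : k ∈ C := h0 ▸ Set.mem_univ k
              exact connectedComponentIn_subset Kᶜ x this hk
          obtain ⟨w, hw1, hw2⟩ := hfrC
          have hwK : w ∈ K := (hclC hw1).resolve_left hw2
          have hwint : w ∈ interior L := hKL hwK
          have : w ∈ closure Lᶜ := closure_mono h hw1
          rw [closure_compl] at this
          exact this hwint
  exact hMcpt.of_isClosed_subset hclosed hsub
end

section
/- Let X be a connected, locally connected, locally compact, σ-compact Hausdorff space and let K ⊆ L be compact subsets of X. Then every connected component of X \ K with noncompact closure contains at least one connected component of X \ L with noncompact closure. -/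
open Set

/-- Each unbounded component of X \ K contains at least one unbounded component of X \ L. -/
theorem stmt7 {X : Type*} [TopologicalSpace X] [T2Space X] [ConnectedSpace X]
    [LocallyConnectedSpace X] [LocallyCompactSpace X] [SigmaCompactSpace X]
    (K L : Set X) (hK : IsCompact K) (hL : IsCompact L) (hKL : K ⊆ L)
    (D : Set X) (hD : ∃ y ∈ Kᶜ, D = connectedComponentIn Kᶜ y)
    (hDunb : ¬ IsCompact (closure D)) :
    ∃ C : Set X, (∃ x ∈ Lᶜ, C = connectedComponentIn Lᶜ x) ∧
      ¬ IsCompact (closure C) ∧ C ⊆ D := by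
  classical
  obtain ⟨y, hyK, hDdef⟩ := hD
  have hLcopen : IsOpen Lᶜ := hL.isClosed.isOpen_compl
  have hLcKc : Lᶜ ⊆ Kᶜ := compl_subset_compl.mpr hKL
  -- any component of Lᶜ meeting D is contained in D
  have hsubD : ∀ x, x ∈ D → x ∈ Lᶜ → connectedComponentIn Lᶜ x ⊆ D := by
    intro x hxD hxL
    have hx' : x ∈ connectedComponentIn Kᶜ y := hDdef ▸ hxD
    rw [hDdef, connectedComponentIn_eq hx']
    exact connectedComponentIn_mono x hLcKc
  rcases L.eq_empty_or_nonempty with hLe | hLne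
  · -- L = ∅ : then K = ∅ and D = univ
    have hKe : K = ∅ := eq_empty_of_subset_empty (hLe ▸ hKL)
    have hDuniv : D = univ := by
      rw [hDdef, hKe, compl_empty, connectedComponentIn_univ,
        PreconnectedSpace.connectedComponent_eq_univ]
    refine ⟨univ, ⟨y, by simp [hLe], ?_⟩, ?_, hDuniv ▸ subset_rfl⟩
    · rw [hLe, compl_empty, connectedComponentIn_univ,
        PreconnectedSpace.connectedComponent_eq_univ]
    · simpa [hDuniv] using hDunb
  -- main case
  by_contra hcon
  push_neg at hcon
  have hcomp : ∀ x, x ∈ D → x ∈ Lᶜ → IsCompact (closure (connectedComponentIn Lᶜ x)) := by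
    intro x hxD hxL
    by_contra hnc
    exact hcon (connectedComponentIn Lᶜ x) ⟨x, hxL, rfl⟩ hnc (hsubD x hxD hxL)
  -- closure of a component of Lᶜ meets Lᶜ only inside the component
  have hclo : ∀ x ∈ Lᶜ, closure (connectedComponentIn Lᶜ x) ∩ Lᶜ ⊆ connectedComponentIn Lᶜ x := by
    intro x hxL z hz
    obtain ⟨hzc, hzL⟩ := hz
    have hzopen : IsOpen (connectedComponentIn Lᶜ z) := hLcopen.connectedComponentIn
    have hne : (connectedComponentIn Lᶜ z ∩ connectedComponentIn Lᶜ x).Nonempty :=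
      mem_closure_iff.mp hzc _ hzopen (mem_connectedComponentIn hzL)
    obtain ⟨w, hw1, hw2⟩ := hne
    have h1 : connectedComponentIn Lᶜ z = connectedComponentIn Lᶜ w := connectedComponentIn_eq hw1
    have h2 : connectedComponentIn Lᶜ x = connectedComponentIn Lᶜ w := connectedComponentIn_eq hw2
    rw [h2, ← h1]
    exact mem_connectedComponentIn hzL
  obtain ⟨N, hNc, hLN⟩ := exists_compact_superset hL
  have hNcl : IsClosed N := hNc.isClosed
  have hFN : frontier N ⊆ Lᶜ := fun z hz hzL => hz.2 (hLN hzL)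
  have hFc : IsCompact (frontier N) :=
    hNc.of_isClosed_subset isClosed_frontier hNcl.frontier_subset
  -- finite subcover of frontier N by components of Lᶜ
  obtain ⟨t, ht⟩ := hFc.elim_finite_subcover
    (fun z : frontier N => connectedComponentIn Lᶜ (z : X))
    (fun z => hLcopen.connectedComponentIn)
    (fun z hz => mem_iUnion.mpr ⟨⟨z, hz⟩, mem_connectedComponentIn (hFN hz)⟩)
  set t' : Finset (frontier N) := t.filter (fun z => (z : X) ∈ D) with ht'
  set M : Set X := N ∪ ⋃ z ∈ t', closure (connectedComponentIn Lᶜ (z : X)) with hM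
  have hMc : IsCompact M := by
    refine hNc.union (t'.isCompact_biUnion fun z hz => ?_)
    exact hcomp _ (Finset.mem_filter.mp hz).2 (hFN z.2)
  have hMcl : IsClosed M :=
    hNcl.union (isClosed_biUnion_finset fun z _ => isClosed_closure)
  have hDM : D ⊆ M := by
    intro x hxD
    by_cases hxL : x ∈ L
    · exact Or.inl (interior_subset (hLN hxL))
    have hxL' : x ∈ Lᶜ := hxL
    set C := connectedComponentIn Lᶜ x with hC
    have hxC : x ∈ C := mem_connectedComponentIn hxL'
    have hCD : C ⊆ D := hsubD x hxD hxL'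
    by_cases hCF : (C ∩ frontier N).Nonempty
    · obtain ⟨w, hwC, hwF⟩ := hCF
      obtain ⟨z, hzt, hwz⟩ := mem_iUnion₂.mp (ht hwF)
      have h1 : C = connectedComponentIn Lᶜ w := connectedComponentIn_eq hwC
      have h2 : connectedComponentIn Lᶜ (z : X) = connectedComponentIn Lᶜ w :=
        connectedComponentIn_eq hwz
      have hzC : connectedComponentIn Lᶜ (z : X) = C := by rw [h1, h2]
      have hzt' : z ∈ t' := by
        refine Finset.mem_filter.mpr ⟨hzt, ?_⟩
        exact hCD (hzC ▸ mem_connectedComponentIn (hFN z.2))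
      refine Or.inr (mem_biUnion hzt' ?_)
      exact subset_closure (hzC ▸ hxC)
    · -- C misses frontier N
      push_neg at hCF
      have hsplit : C ⊆ interior N ∪ (closure N)ᶜ := by
        intro a ha
        by_cases hac : a ∈ closure N
        · left
          by_contra hai
          exact absurd (hCF ▸ (mem_inter ha ⟨hac, hai⟩)) (notMem_empty a)
        · exact Or.inr hac
      rcases (isPreconnected_connectedComponentIn).subset_or_subset isOpen_interior
        (isClosed_closure.isOpen_compl)
        (disjoint_compl_right.mono_left interior_subset_closure) hsplit with hCi | hCe
      · exact Or.inl (interior_subset (hCi hxC))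
      · -- C ⊆ (closure N)ᶜ : impossible since L nonempty
        exfalso
        have hcc : closure C ⊆ Lᶜ := by
          have : closure C ⊆ (interior (closure N))ᶜ := by
            calc closure C ⊆ closure ((closure N)ᶜ) := closure_mono hCe
              _ = (interior (closure N))ᶜ := closure_compl
          intro a ha haL
          exact this ha (interior_mono subset_closure (hLN haL))
        have hCcl : IsClosed C := by
          have : closure C ⊆ C := fun a ha => hclo x hxL' ⟨ha, hcc ha⟩
          exact isClosed_of_closure_subset this
        have hCuniv : C = univ :=
          IsClopen.eq_univ ⟨hCcl, hLcopen.connectedComponentIn⟩ ⟨x, hxC⟩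
        obtain ⟨l, hl⟩ := hLne
        have hlC : l ∈ C := hCuniv.symm ▸ mem_univ l
        exact (connectedComponentIn_subset Lᶜ x hlC) hl
  exact hDunb (hMc.of_isClosed_subset isClosed_closure (closure_minimal hDM hMcl))
end

section
/- Every generalized continuum admits an efficient exhaustion by compacta: a compact exhaustion (Kᵢ) in which each Kᵢ is connected and every connected component of X \ Kᵢ has noncompact closure. -/
open Set Topology

section Aux

variable {X : Type*} [TopologicalSpace X] [T2Space X] [ConnectedSpace X]
    [LocallyConnectedSpace X] [LocallyCompactSpace X]

/-- Closure of a component of the complement of a closed set stays within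
the component together with the set. -/
lemma aux_closure_ccIn {K : Set X} (hK : IsClosed K) {x : X} :
    closure (connectedComponentIn Kᶜ x) ⊆ connectedComponentIn Kᶜ x ∪ K := by
  intro y hy
  by_cases hyK : y ∈ K
  · exact Or.inr hyK
  · left
    have hyc : y ∈ Kᶜ := hyK
    have ho : IsOpen (connectedComponentIn Kᶜ y) := hK.isOpen_compl.connectedComponentIn
    obtain ⟨z, hz1, hz2⟩ :=
      mem_closure_iff.mp hy _ ho (mem_connectedComponentIn hyc)
    have h1 : connectedComponentIn Kᶜ y = connectedComponentIn Kᶜ z := connectedComponentIn_eq hz1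
    have h2 : connectedComponentIn Kᶜ x = connectedComponentIn Kᶜ z := connectedComponentIn_eq hz2
    rw [h2, ← h1]
    exact mem_connectedComponentIn hyc

/-- Every point has a compact connected set around it with the point in the interior. -/
lemma aux_nbhd (x : X) : ∃ A : Set X, IsCompact A ∧ IsConnected A ∧ x ∈ interior A := by
  obtain ⟨N, hNc, hN⟩ := exists_compact_mem_nhds x
  have hxint : x ∈ interior N := mem_interior_iff_mem_nhds.mpr hN
  set U := connectedComponentIn (interior N) x with hU
  have hUo : IsOpen U := isOpen_interior.connectedComponentIn
  have hUx : x ∈ U := mem_connectedComponentIn hxint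
  refine ⟨closure U, ?_, ?_, ?_⟩
  · exact hNc.of_isClosed_subset isClosed_closure
      ((closure_mono ((connectedComponentIn_subset _ _).trans interior_subset)).trans
        (by rw [hNc.isClosed.closure_eq]))
  · exact (isConnected_connectedComponentIn_iff.mpr hxint).closure
  · exact interior_maximal subset_closure hUo hUx

/-- Every compact set is contained in the interior of a compact connected set. -/
lemma aux_bigger {C : Set X} (hC : IsCompact C) :
    ∃ A : Set X, IsCompact A ∧ IsConnected A ∧ C ⊆ interior A := by
  obtain ⟨x₀⟩ := (inferInstance : ConnectedSpace X).toNonempty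
  set S : Set X := {x | ∃ A : Set X, IsCompact A ∧ IsConnected A ∧ x₀ ∈ A ∧ x ∈ interior A}
    with hS
  have hSuniv : S = univ := by
    have hopen : IsOpen S := by
      rw [isOpen_iff_forall_mem_open]
      rintro x ⟨A, hAc, hAconn, hA0, hAx⟩
      exact ⟨interior A, fun y hy => ⟨A, hAc, hAconn, hA0, hy⟩, isOpen_interior, hAx⟩
    have hclosed : IsClosed S := by
      rw [← closure_subset_iff_isClosed]
      intro x hx
      obtain ⟨B, hBc, hBconn, hxB⟩ := aux_nbhd x
      obtain ⟨y, hy1, A, hAc, hAconn, hA0, hAy⟩ :=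
        mem_closure_iff.mp hx _ isOpen_interior hxB
      refine ⟨A ∪ B, hAc.union hBc, ?_, Or.inl hA0, ?_⟩
      · exact hAconn.union ⟨y, interior_subset hAy, interior_subset hy1⟩ hBconn
      · exact interior_mono subset_union_right hxB
    have hne : S.Nonempty := by
      obtain ⟨A, hAc, hAconn, hA0⟩ := aux_nbhd x₀
      exact ⟨x₀, A, hAc, hAconn, interior_subset hA0, hA0⟩
    exact IsClopen.eq_univ (s := S) ⟨hclosed, hopen⟩ hne
  have hall : ∀ x : X, ∃ A : Set X, IsCompact A ∧ IsConnected A ∧ x₀ ∈ A ∧ x ∈ interior A :=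
    fun x => (hSuniv ▸ mem_univ x : x ∈ S)
  choose A hA1 hA2 hA3 hA4 using hall
  obtain ⟨t, ht⟩ := hC.elim_finite_subcover (fun x => interior (A x))
    (fun _ => isOpen_interior) (fun x _ => mem_iUnion.mpr ⟨x, hA4 x⟩)
  refine ⟨⋃₀ insert (A x₀) (A '' (t : Set X)),
    ((t.finite_toSet.image A).insert (A x₀)).isCompact_sUnion ?_, ⟨?_, ?_⟩, ?_⟩
  · rintro s (rfl | ⟨x, _, rfl⟩)
    · exact hA1 x₀
    · exact hA1 x
  · exact ⟨x₀, A x₀, mem_insert _ _, hA3 x₀⟩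
  · refine isPreconnected_sUnion x₀ _ ?_ ?_
    · rintro s (rfl | ⟨x, _, rfl⟩)
      · exact hA3 x₀
      · exact hA3 x
    · rintro s (rfl | ⟨x, _, rfl⟩)
      · exact (hA2 x₀).isPreconnected
      · exact (hA2 x).isPreconnected
  · intro x hx
    obtain ⟨z, hz1, hz2⟩ := mem_iUnion₂.mp (ht hx)
    exact interior_mono (subset_sUnion_of_mem (Or.inr ⟨z, hz1, rfl⟩)) hz2

/-- Filling lemma: a compact connected set can be enlarged to a compact connected set
all of whose complementary components have noncompact closure. -/
lemma aux_fill {K : Set X} (hKc : IsCompact K) (hKconn : IsConnected K) :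
    ∃ K' : Set X, IsCompact K' ∧ IsConnected K' ∧ K ⊆ K' ∧
      ∀ x ∈ K'ᶜ, ¬ IsCompact (closure (connectedComponentIn K'ᶜ x)) := by
  have hKcl : IsClosed K := hKc.isClosed
  set N : Set X := {x | x ∈ Kᶜ ∧ ¬ IsCompact (closure (connectedComponentIn Kᶜ x))} with hN
  -- components are entirely inside or outside N
  have hccN : ∀ x ∈ N, connectedComponentIn Kᶜ x ⊆ N := by
    rintro x ⟨hx1, hx2⟩ y hy
    have hyc : y ∈ Kᶜ := connectedComponentIn_subset _ _ hy
    have : connectedComponentIn Kᶜ x = connectedComponentIn Kᶜ y := connectedComponentIn_eq hy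
    exact ⟨hyc, this ▸ hx2⟩
  have hccK' : ∀ x, x ∈ Kᶜ → x ∉ N → connectedComponentIn Kᶜ x ⊆ Nᶜ := by
    intro x hx hxN y hy hyN
    have hyc : y ∈ Kᶜ := connectedComponentIn_subset _ _ hy
    have h1 : connectedComponentIn Kᶜ x = connectedComponentIn Kᶜ y := connectedComponentIn_eq hy
    exact hxN ⟨hx, h1 ▸ hyN.2⟩
  have hNopen : IsOpen N := by
    rw [isOpen_iff_forall_mem_open]
    intro x hx
    exact ⟨connectedComponentIn Kᶜ x, hccN x hx, hKcl.isOpen_compl.connectedComponentIn,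
      mem_connectedComponentIn hx.1⟩
  -- every complementary component's closure meets K
  have hmeet : ∀ x ∈ Kᶜ, (closure (connectedComponentIn Kᶜ x) ∩ K).Nonempty := by
    intro x hx
    by_contra h
    have hsub : closure (connectedComponentIn Kᶜ x) ⊆ connectedComponentIn Kᶜ x := by
      intro y hy
      rcases aux_closure_ccIn hKcl hy with h1 | h1
      · exact h1
      · exact absurd ⟨y, hy, h1⟩ h
    have hclopen : IsClopen (connectedComponentIn Kᶜ x) :=
      ⟨closure_subset_iff_isClosed.mp hsub, hKcl.isOpen_compl.connectedComponentIn⟩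
    have huniv := hclopen.eq_univ ⟨x, mem_connectedComponentIn hx⟩
    obtain ⟨k, hk⟩ := hKconn.nonempty
    exact (connectedComponentIn_subset Kᶜ x (huniv ▸ mem_univ k)) hk
  -- compactness of the filled set
  obtain ⟨L, hLc, _, hKL⟩ := aux_bigger hKc
  have hLcl : IsClosed L := hLc.isClosed
  have hFc : IsCompact (frontier L) :=
    hLc.of_isClosed_subset isClosed_frontier hLcl.frontier_subset
  have hFK : frontier L ⊆ Kᶜ := fun z hz hzK => hz.2 (hKL hzK)
  obtain ⟨T, hTsub, hTfin, hTcov⟩ := hFc.elim_finite_subcover_image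
    (b := frontier L) (c := fun z => connectedComponentIn Kᶜ z)
    (fun z _ => hKcl.isOpen_compl.connectedComponentIn)
    (fun z hz => mem_biUnion hz (mem_connectedComponentIn (hFK hz)))
  set M : Set X := L ∪ ⋃ z ∈ {z ∈ T | IsCompact (closure (connectedComponentIn Kᶜ z))},
      closure (connectedComponentIn Kᶜ z) with hM
  have hMc : IsCompact M := by
    refine hLc.union ?_
    exact (hTfin.subset (sep_subset _ _)).isCompact_biUnion (fun z hz => hz.2)
  have hK'M : Nᶜ ⊆ M := by
    intro x hx
    by_cases hxK : x ∈ K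
    · exact Or.inl (interior_subset (hKL hxK))
    · have hxc : x ∈ Kᶜ := hxK
      have hcomp : IsCompact (closure (connectedComponentIn Kᶜ x)) := by
        by_contra h; exact hx ⟨hxc, h⟩
      by_cases hmeetF : (connectedComponentIn Kᶜ x ∩ frontier L).Nonempty
      · obtain ⟨w, hw1, hw2⟩ := hmeetF
        obtain ⟨z, hz1, hz2⟩ := mem_iUnion₂.mp (hTcov hw2)
        have e1 : connectedComponentIn Kᶜ x = connectedComponentIn Kᶜ w :=
          connectedComponentIn_eq hw1
        have e2 : connectedComponentIn Kᶜ z = connectedComponentIn Kᶜ w :=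
          connectedComponentIn_eq hz2
        have e3 : connectedComponentIn Kᶜ x = connectedComponentIn Kᶜ z := e1.trans e2.symm
        refine Or.inr (mem_biUnion ⟨hz1, e3 ▸ hcomp⟩ ?_)
        exact e3 ▸ subset_closure (mem_connectedComponentIn hxc)
      · have hsplit : connectedComponentIn Kᶜ x ⊆ interior L ∪ Lᶜ := by
          intro y hy
          by_cases hyL : y ∈ L
          · left
            by_contra hyint
            exact hmeetF ⟨y, hy, ⟨subset_closure hyL, hyint⟩⟩
          · exact Or.inr hyL
        rcases IsPreconnected.subset_or_subset (s := connectedComponentIn Kᶜ x)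
            isOpen_interior hLcl.isOpen_compl
            (disjoint_compl_right.mono_left interior_subset) hsplit
            isPreconnected_connectedComponentIn with h1 | h1
        · exact Or.inl (interior_subset (h1 (mem_connectedComponentIn hxc)))
        · exfalso
          obtain ⟨w, hw1, hw2⟩ := hmeet x hxc
          have hsub2 : closure Lᶜ ⊆ (interior L)ᶜ :=
            closure_minimal (compl_subset_compl.mpr interior_subset)
              isOpen_interior.isClosed_compl
          exact hsub2 (closure_mono h1 hw1) (hKL hw2)
  have hK'cl : IsClosed (Nᶜ : Set X) := hNopen.isClosed_compl
  have hK'c : IsCompact (Nᶜ : Set X) := hMc.of_isClosed_subset hK'cl hK'M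
  have hKK' : K ⊆ Nᶜ := fun x hx hxN => hxN.1 hx
  -- the components inside Nᶜ
  have hccsub : ∀ x, x ∈ Nᶜ → x ∈ Kᶜ → connectedComponentIn Kᶜ x ⊆ Nᶜ :=
    fun x hx hxc => hccK' x hxc hx
  have hK'conn : IsConnected (Nᶜ : Set X) := by
    obtain ⟨k, hk⟩ := hKconn.nonempty
    refine ⟨⟨k, hKK' hk⟩, ?_⟩
    have key : (Nᶜ : Set X) =
        ⋃₀ insert K {s | ∃ x, (x ∈ Nᶜ ∧ x ∈ Kᶜ) ∧
          s = closure (connectedComponentIn Kᶜ x) ∪ K} := by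
      apply Subset.antisymm
      · intro x hx
        by_cases hxK : x ∈ K
        · exact ⟨K, mem_insert _ _, hxK⟩
        · exact ⟨closure (connectedComponentIn Kᶜ x) ∪ K,
            Or.inr ⟨x, ⟨hx, hxK⟩, rfl⟩,
            Or.inl (subset_closure (mem_connectedComponentIn hxK))⟩
      · rintro y ⟨s, (rfl | ⟨x, ⟨hx1, hx2⟩, rfl⟩), hys⟩
        · exact hKK' hys
        · rcases hys with hy | hy
          · rcases aux_closure_ccIn hKcl hy with h1 | h1
            · exact hccsub x hx1 hx2 h1
            · exact hKK' h1
          · exact hKK' hy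
    rw [key]
    refine isPreconnected_sUnion k _ ?_ ?_
    · rintro s (rfl | ⟨x, ⟨_, _⟩, rfl⟩)
      · exact hk
      · exact Or.inr hk
    · rintro s (rfl | ⟨x, ⟨hx1, hx2⟩, rfl⟩)
      · exact hKconn.isPreconnected
      · obtain ⟨w, hw1, hw2⟩ := hmeet x hx2
        exact IsPreconnected.union w hw1 hw2
          (isPreconnected_connectedComponentIn).closure hKconn.isPreconnected
  refine ⟨Nᶜ, hK'c, hK'conn, hKK', ?_⟩
  intro x hx
  rw [compl_compl] at hx ⊢
  have hxc : x ∈ Kᶜ := hx.1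
  have hEq : connectedComponentIn N x = connectedComponentIn Kᶜ x := by
    apply Subset.antisymm
    · exact connectedComponentIn_mono x (fun y hy => hy.1)
    · exact (isPreconnected_connectedComponentIn).subset_connectedComponentIn
        (mem_connectedComponentIn hxc) (hccN x hx)
  rw [hEq]
  exact hx.2

/-- Step lemma: any compact set is in the interior of an efficient compactum. -/
lemma aux_step {C : Set X} (hC : IsCompact C) :
    ∃ K' : Set X, IsCompact K' ∧ IsConnected K' ∧ C ⊆ interior K' ∧
      ∀ x ∈ K'ᶜ, ¬ IsCompact (closure (connectedComponentIn K'ᶜ x)) := by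
  obtain ⟨A, hAc, hAconn, hCA⟩ := aux_bigger hC
  obtain ⟨K', h1, h2, h3, h4⟩ := aux_fill hAc hAconn
  exact ⟨K', h1, h2, hCA.trans (interior_mono h3), h4⟩

end Aux

/-- Every generalized continuum admits an efficient exhaustion by compacta:
each term is connected and every component of its complement has noncompact closure. -/
theorem stmt9 {X : Type*} [TopologicalSpace X] [T2Space X] [ConnectedSpace X]
    [LocallyConnectedSpace X] [LocallyCompactSpace X] [SigmaCompactSpace X] :
    ∃ K : ℕ → Set X, (∀ i, IsCompact (K i)) ∧ (∀ i, K i ⊆ K (i + 1)) ∧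
      (⋃ i, K i) = Set.univ ∧ (∀ i, K i ⊆ interior (K (i + 1))) ∧
      (∀ i, IsConnected (K i)) ∧
      (∀ i, ∀ x ∈ (K i)ᶜ, ¬ IsCompact (closure (connectedComponentIn (K i)ᶜ x))) := by
  classical
  set E := CompactExhaustion.choice X with hE
  have step : ∀ p : {s : Set X // IsCompact s}, ∃ K' : Set X,
      IsCompact K' ∧ IsConnected K' ∧ p.1 ⊆ interior K' ∧
      ∀ x ∈ K'ᶜ, ¬ IsCompact (closure (connectedComponentIn K'ᶜ x)) :=
    fun p => aux_step p.2
  choose g hg1 hg2 hg3 hg4 using step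
  let J : ℕ → {s : Set X // IsCompact s} := fun n =>
    Nat.rec ⟨g ⟨E 0, E.isCompact 0⟩, hg1 _⟩
      (fun n p => ⟨g ⟨p.1 ∪ E (n + 1), p.2.union (E.isCompact _)⟩, hg1 _⟩) n
  have hJsucc : ∀ n, (J (n + 1)).1 = g ⟨(J n).1 ∪ E (n + 1),
      (J n).2.union (E.isCompact _)⟩ := fun n => rfl
  have hint : ∀ n, (J n).1 ∪ E (n + 1) ⊆ interior (J (n + 1)).1 := by
    intro n
    rw [hJsucc n]
    exact hg3 ⟨(J n).1 ∪ E (n + 1), (J n).2.union (E.isCompact _)⟩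
  have hEsub : ∀ n, E n ⊆ (J n).1 := by
    intro n
    cases n with
    | zero => exact (hg3 ⟨E 0, E.isCompact 0⟩).trans interior_subset
    | succ n => exact (subset_union_right.trans (hint n)).trans interior_subset
  refine ⟨fun n => (J n).1, fun n => (J n).2, ?_, ?_, ?_, ?_, ?_⟩
  · exact fun n => (subset_union_left.trans (hint n)).trans interior_subset
  · apply Set.eq_univ_of_univ_subset
    rw [← E.iUnion_eq]
    exact Set.iUnion_mono hEsub
  · exact fun n => subset_union_left.trans (hint n)
  · intro n
    cases n with
    | zero => exact hg2 _
    | succ n => show IsConnected (J (n + 1)).1; rw [hJsucc n]; exact hg2 _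
  · intro n
    cases n with
    | zero => exact hg4 _
    | succ n =>
        show ∀ x ∈ ((J (n + 1)).1)ᶜ,
          ¬ IsCompact (closure (connectedComponentIn ((J (n + 1)).1)ᶜ x))
        rw [hJsucc n]; exact hg4 _
end

section
/- Let X be a noncompact generalized continuum. Then the one-point (Alexandroff) compactification of X is connected. Moreover, if (Kᵢ) is an efficient compact exhaustion of X, the sets A(X) \ Kᵢ form a neighborhood basis of the point at infinity consisting of connected open sets. -/
/-!
Every neighbourhood of `∞` contains the complement of a compact set, and a compact set lies
in some `Kᵢ`, so the sets `A(X) \ Kᵢ` form a basis at `∞`. Each of them is `{∞}` together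
with the components of `X \ Kᵢ`; as these components have noncompact closure, `∞` lies in
the closure of each of them, so attaching `∞` to a component keeps it connected and all of
them are chained together through `∞`. Connectedness of `A(X)` itself holds because `X` is
dense in it.
-/

open OnePoint Set Topology

namespace OnePoint

variable {X : Type*} [TopologicalSpace X]

theorem infty_mem_closure_image_coe {s : Set X} (hs : ¬IsCompact (closure s)) :
    (∞ : OnePoint X) ∈ closure ((↑) '' s : Set (OnePoint X)) := by
  rw [mem_closure_iff_nhds_basis hasBasis_nhds_infty]
  rintro t ⟨htc, htk⟩
  obtain ⟨z, hzs, hzt⟩ := not_subset.1 fun hst : s ⊆ t =>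
    hs (htk.of_isClosed_subset isClosed_closure (closure_minimal hst htc))
  exact ⟨z, mem_image_of_mem _ hzs, mem_union_left _ (mem_image_of_mem _ hzt)⟩

theorem isConnected_compl_image_coe {s : Set X}
    (hs : ∀ x ∈ sᶜ, ¬IsCompact (closure (connectedComponentIn sᶜ x))) :
    IsConnected ((↑) '' s : Set (OnePoint X))ᶜ := by
  refine ⟨⟨∞, infty_notMem_image_coe⟩, isPreconnected_of_forall ∞ ?_⟩
  rw [compl_image_coe]
  rintro _ (⟨x, hx, rfl⟩ | rfl)
  · set C := connectedComponentIn sᶜ x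
    have hC : IsPreconnected ((↑) '' C : Set (OnePoint X)) :=
      isPreconnected_connectedComponentIn.image _ continuous_coe.continuousOn
    refine ⟨insert ∞ ((↑) '' C), ?_, mem_insert _ _, ?_, ?_⟩
    · exact insert_subset (mem_union_right _ rfl)
        (subset_union_of_subset_left (image_mono (connectedComponentIn_subset _ _)) _)
    · exact mem_insert_of_mem _ (mem_image_of_mem _ (mem_connectedComponentIn hx))
    · exact hC.subset_closure (subset_insert _ _)
        (insert_subset (infty_mem_closure_image_coe (hs x hx)) subset_closure)
  · exact ⟨{∞}, subset_union_right, rfl, rfl, isPreconnected_singleton⟩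

theorem hasBasis_nhds_infty_compactExhaustion [T2Space X] (K : CompactExhaustion X) :
    (𝓝 (∞ : OnePoint X)).HasBasis (fun _ : ℕ => True)
      (fun n => ((↑) '' K n : Set (OnePoint X))ᶜ) := by
  refine hasBasis_nhds_infty.to_hasBasis (fun s ⟨_, hsk⟩ => ?_) fun n _ =>
    ⟨K n, ⟨(K.isCompact n).isClosed, K.isCompact n⟩, (compl_image_coe _).ge⟩
  obtain ⟨n, hsn⟩ := K.exists_superset_of_isCompact hsk
  refine ⟨n, trivial, ?_⟩
  rw [compl_image_coe]
  exact union_subset_union_left _ (image_mono (compl_subset_compl.2 hsn))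

end OnePoint

theorem stmt14_general {X : Type*} [TopologicalSpace X] [T2Space X] [ConnectedSpace X]
    [NoncompactSpace X]
    (K : ℕ → Set X) (hcpt : ∀ i, IsCompact (K i))
    (hcover : (⋃ i, K i) = Set.univ) (hint : ∀ i, K i ⊆ interior (K (i + 1)))
    (heff : ∀ i, ∀ x ∈ (K i)ᶜ, ¬ IsCompact (closure (connectedComponentIn (K i)ᶜ x))) :
    ConnectedSpace (OnePoint X) ∧
      (∀ i, IsOpen (((↑) '' K i : Set (OnePoint X))ᶜ) ∧
        IsConnected (((↑) '' K i : Set (OnePoint X))ᶜ)) ∧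
      (nhds (∞ : OnePoint X)).HasBasis (fun _ : ℕ => True)
        (fun i => ((↑) '' K i : Set (OnePoint X))ᶜ) :=
  ⟨inferInstance,
    fun i => ⟨isOpen_compl_image_coe.2 ⟨(hcpt i).isClosed, hcpt i⟩,
      isConnected_compl_image_coe (heff i)⟩,
    hasBasis_nhds_infty_compactExhaustion ⟨K, hcpt, hint, hcover⟩⟩

/-- For a noncompact generalized continuum X, the one-point compactification is
connected, and given an efficient compact exhaustion (Kᵢ), the complements of the
Kᵢ in A(X) form a neighborhood basis of ∞ consisting of connected open sets. -/
theorem stmt14 {X : Type*} [TopologicalSpace X] [T2Space X] [ConnectedSpace X]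
    [LocallyConnectedSpace X] [LocallyCompactSpace X] [SigmaCompactSpace X]
    [NoncompactSpace X]
    (K : ℕ → Set X) (hcpt : ∀ i, IsCompact (K i)) (hmono : ∀ i, K i ⊆ K (i + 1))
    (hcover : (⋃ i, K i) = Set.univ) (hint : ∀ i, K i ⊆ interior (K (i + 1)))
    (hconn : ∀ i, IsConnected (K i))
    (heff : ∀ i, ∀ x ∈ (K i)ᶜ, ¬ IsCompact (closure (connectedComponentIn (K i)ᶜ x))) :
    ConnectedSpace (OnePoint X) ∧
      (∀ i, IsOpen (((↑) '' K i : Set (OnePoint X))ᶜ) ∧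
        IsConnected (((↑) '' K i : Set (OnePoint X))ᶜ)) ∧
      (nhds (∞ : OnePoint X)).HasBasis (fun _ : ℕ => True)
        (fun i => ((↑) '' K i : Set (OnePoint X))ᶜ) :=
  stmt14_general K hcpt hcover hint heff
end

section
/- Let f : G → H be an injective homomorphism of finitely generated free modules over a PID R. Then f is extension preserving if and only if there exists a single basis B of G such that f(B) extends to a basis of H. -/
/-!
If `f` maps a basis `b` of `G` into a basis `c` of `H`, the vectors of `c` outside `f(b)` span a
free complement `F` of `f(G)`, i.e. `H ≅ G × F` compatibly with `f`. Pushing forward the basis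
`b' ⊔ (basis of F)` of `G × F` along this isomorphism extends `f(b')`, for every basis `b'` of `G`,
and hence also the image of every subset of `b'`.
-/

open Module

universe w

section ComplementOfBasisImage

variable {R G H : Type*} [CommRing R] [AddCommGroup G] [Module R G] [AddCommGroup H]
  [Module R H]

theorem Module.Basis.exists_linearEquiv_prod_finsupp_of_range_comp_subset [Nontrivial R]
    {ι : Type*} {κ : Type w} (b : Basis ι R G) (c : Basis κ R H) (f : G →ₗ[R] H)
    (hf : Function.Injective f) (hbc : Set.range (f ∘ b) ⊆ Set.range c) :
    ∃ (σ : Type w) (e : (G × (σ →₀ R)) ≃ₗ[R] H), ∀ g, e (g, 0) = f g := by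
  classical
  choose k hk using fun i => hbc ⟨i, rfl⟩
  have hk_inj : Function.Injective k := fun i i' hii =>
    b.injective (hf ((hk i).symm.trans (hii ▸ hk i')))
  let e₀ : ι ⊕ ↥(Set.range k)ᶜ ≃ κ :=
    (Equiv.sumCongr (Equiv.ofInjective k hk_inj) (Equiv.refl _)).trans (Equiv.Set.sumCompl _)
  let e := (b.prod Finsupp.basisSingleOne).equiv c e₀
  refine ⟨↥(Set.range k)ᶜ, e, fun g => ?_⟩
  suffices (e : G × (↥(Set.range k)ᶜ →₀ R) →ₗ[R] H) ∘ₗ LinearMap.inl R _ _ = f from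
    LinearMap.congr_fun this g
  refine b.ext fun i => ?_
  have hbi : (b i, (0 : ↥(Set.range k)ᶜ →₀ R)) = b.prod Finsupp.basisSingleOne (Sum.inl i) := by
    ext <;> simp
  simp only [LinearMap.coe_comp, LinearEquiv.coe_coe, Function.comp_apply, LinearMap.inl_apply,
    hbi, e, Basis.equiv_apply]
  simpa [e₀, Equiv.Set.sumCompl_apply_inl] using hk i

theorem Module.Basis.range_comp_subset_range_prod_map {ι σ M : Type*} [AddCommGroup M]
    [Module R M] (b : Basis ι R G) (d : Basis σ R M) (f : G →ₗ[R] H) (e : (G × M) ≃ₗ[R] H)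
    (he : ∀ g, e (g, 0) = f g) : Set.range (f ∘ b) ⊆ Set.range ((b.prod d).map e) := by
  rintro _ ⟨i, rfl⟩
  exact ⟨Sum.inl i, by simp [he]⟩

end ComplementOfBasisImage

theorem stmt19_general {R : Type} [CommRing R] [IsDomain R]
    {G H : Type} [AddCommGroup G] [Module R G] [AddCommGroup H] [Module R H]
    [Module.Free R G]
    (f : G →ₗ[R] H) (hf : Function.Injective f) :
    (∀ S : Set G, (∃ (ι : Type) (b : Module.Basis ι R G), S ⊆ Set.range b) →
      ∃ (κ : Type) (c : Module.Basis κ R H), f '' S ⊆ Set.range c) ↔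
    ∃ (ι : Type) (b : Module.Basis ι R G) (κ : Type) (c : Module.Basis κ R H),
      Set.range (⇑f ∘ ⇑b) ⊆ Set.range c := by
  constructor
  · intro h
    let b := Free.chooseBasis R G
    obtain ⟨κ, c, hc⟩ := h (Set.range b) ⟨_, b, subset_rfl⟩
    exact ⟨_, b, κ, c, by rwa [Set.range_comp]⟩
  · rintro ⟨ι, b, κ, c, hbc⟩ S ⟨ι', b', hS⟩
    obtain ⟨σ, e, he⟩ := b.exists_linearEquiv_prod_finsupp_of_range_comp_subset c f hf hbc
    refine ⟨ι' ⊕ σ, (b'.prod Finsupp.basisSingleOne).map e, ?_⟩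
    calc f '' S ⊆ f '' Set.range b' := Set.image_mono hS
      _ = Set.range (f ∘ b') := (Set.range_comp f b').symm
      _ ⊆ _ := b'.range_comp_subset_range_prod_map _ f e he

/-- An injective map of f.g. free modules over a PID is extension preserving iff
some basis of the domain is mapped into (a subset extendable to) a basis of the codomain. -/
theorem stmt19 {R : Type} [CommRing R] [IsDomain R] [IsPrincipalIdealRing R]
    {G H : Type} [AddCommGroup G] [Module R G] [AddCommGroup H] [Module R H]
    [Module.Free R G] [Module.Finite R G] [Module.Free R H] [Module.Finite R H]
    (f : G →ₗ[R] H) (hf : Function.Injective f) :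
    (∀ S : Set G, (∃ (ι : Type) (b : Module.Basis ι R G), S ⊆ Set.range b) →
      ∃ (κ : Type) (c : Module.Basis κ R H), f '' S ⊆ Set.range c) ↔
    ∃ (ι : Type) (b : Module.Basis ι R G) (κ : Type) (c : Module.Basis κ R H),
      Set.range (⇑f ∘ ⇑b) ⊆ Set.range c :=
  stmt19_general f hf
end
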